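/- For any α, ρ > 0, Z ∈ R^{M×N}, and integer θ with 0 ≤ θ < min{M,N}, the matrix X̂ = U diag([σ − 1_θ·α/ρ]₊) Vᵀ is an optimal solution of X ↦ α‖X‖_{θ,*} + (ρ/2)‖X − Z‖_F², where Z = U diag(σ) Vᵀ is the SVD of Z, 1_θ is the 0/1 vector whose first θ entries are 0 and remaining entries are 1, and [·]₊ denotes entrywise positive truncation. -/

import Mathlib

open Matrix Finset

noncomputable def frobSq {m n : Type*} [Fintype m] [Fintype n] (A : Matrix m n ℝ) : ℝ :=
  ∑ i, ∑ j, (A i j) ^ 2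

noncomputable def frobNorm {m n : Type*} [Fintype m] [Fintype n] (A : Matrix m n ℝ) : ℝ :=
  Real.sqrt (frobSq A)

/-- The singular values of `A` (indexed by columns; padded with zeros),
defined as square roots of the eigenvalues of `Aᵀ * A`. -/
noncomputable def svals {m n : Type*} [Fintype m] [Fintype n] [DecidableEq n]
    (A : Matrix m n ℝ) : n → ℝ :=
  fun j => Real.sqrt ((show (Aᵀ * A).IsHermitian by
    simpa using Matrix.isHermitian_conjTranspose_mul_self A).eigenvalues j)

/-- Nuclear norm: sum of singular values. -/
noncomputable def nuclearNorm {m n : Type*} [Fintype m] [Fintype n] [DecidableEq n]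
    (A : Matrix m n ℝ) : ℝ := ∑ j, svals A j

/-- Singular values sorted in nonincreasing order. -/
noncomputable def svalsDesc {M N : ℕ} (A : Matrix (Fin M) (Fin N) ℝ) : Fin N → ℝ :=
  fun i => (svals A ∘ Tuple.sort (svals A)) i.rev

/-- Truncated nuclear norm: sum of all but the `θ` largest singular values. -/
noncomputable def tnn {M N : ℕ} (θ : ℕ) (A : Matrix (Fin M) (Fin N) ℝ) : ℝ :=
  ∑ i ∈ Finset.univ.filter (fun i : Fin N => θ ≤ (i : ℕ)), svalsDesc A i

/-- Spectral norm: largest singular value. -/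
noncomputable def specNorm {m n : Type*} [Fintype m] [Fintype n] [DecidableEq n]
    (A : Matrix m n ℝ) : ℝ := ⨆ j, svals A j

/-- Rectangular diagonal matrix. -/
def rdiag {M N : ℕ} (σ : Fin (min M N) → ℝ) : Matrix (Fin M) (Fin N) ℝ :=
  fun i j => if h : (i : ℕ) = (j : ℕ) ∧ (i : ℕ) < min M N then σ ⟨i, h.2⟩ else 0

theorem Matrix.isHermitian_transpose_mul_self {m n : Type*} [Fintype m] [Fintype n]
    (A : Matrix m n ℝ) : (Aᵀ * A).IsHermitian := by
  simpa using Matrix.isHermitian_conjTranspose_mul_self A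


namespace GSVT
open Polynomial

variable {N : ℕ}

noncomputable def descSort (f : Fin N → ℝ) : Fin N → ℝ := fun i => (f ∘ Tuple.sort f) i.rev

lemma descSort_antitone (f : Fin N → ℝ) : Antitone (descSort f) := by
  intro i j hij
  exact Tuple.monotone_sort f (Fin.rev_le_rev.mpr hij)

lemma descSort_eq_of_comp_perm (f : Fin N → ℝ) (σ : Equiv.Perm (Fin N)) :
    descSort (f ∘ σ) = descSort f := by
  funext i
  simp only [descSort]
  rw [Tuple.comp_perm_comp_sort_eq_comp_sort]

lemma sortAsc_eq_of_multiset_eq {f g : Fin N → ℝ}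
    (h : Multiset.map f Finset.univ.val = Multiset.map g Finset.univ.val) :
    f ∘ Tuple.sort f = g ∘ Tuple.sort g := by
  apply List.ofFn_injective
  refine (fun p s1 s2 => List.Perm.eq_of_sortedLE s1 s2 p) ?_ ?_ ?_
  · refine ((Equiv.Perm.ofFn_comp_perm (Tuple.sort f) f).trans ?_).trans
      (Equiv.Perm.ofFn_comp_perm (Tuple.sort g) g).symm
    rw [← Multiset.coe_eq_coe]
    have hf : (↑(List.ofFn f) : Multiset ℝ) = Multiset.map f Finset.univ.val := by
      rw [List.ofFn_eq_map]; rfl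
    have hg : (↑(List.ofFn g) : Multiset ℝ) = Multiset.map g Finset.univ.val := by
      rw [List.ofFn_eq_map]; rfl
    rw [hf, hg, h]
  · exact (Tuple.monotone_sort f).sortedLE_ofFn
  · exact (Tuple.monotone_sort g).sortedLE_ofFn

lemma descSort_eq_of_multiset_eq {f g : Fin N → ℝ}
    (h : Multiset.map f Finset.univ.val = Multiset.map g Finset.univ.val) :
    descSort f = descSort g := by
  funext i; simp only [descSort]; rw [sortAsc_eq_of_multiset_eq h]

lemma descSort_eq_self_of_antitone {f : Fin N → ℝ} (hf : Antitone f) :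
    descSort f = f := by
  have h : f ∘ (Fin.revPerm : Equiv.Perm (Fin N)) = f ∘ Tuple.sort f := by
    rw [Tuple.comp_sort_eq_comp_iff_monotone]
    intro i j hij
    exact hf (by simpa using Fin.rev_le_rev.mpr hij)
  funext i
  have := congrFun h i.rev
  simp only [Function.comp_apply, Fin.revPerm_apply, Fin.rev_rev] at this
  simp only [descSort, Function.comp_apply, ← this]



lemma sum_dite_lt {n N : ℕ} (h : n ≤ N) (F : Fin n → ℝ) :
    ∑ i : Fin N, (if h' : (i : ℕ) < n then F ⟨i, h'⟩ else 0) = ∑ k : Fin n, F k := by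
  set g : ℕ → ℝ := fun j => if h' : j < n then F ⟨j, h'⟩ else 0 with hg
  have h1 : ∑ i : Fin N, (if h' : (i : ℕ) < n then F ⟨i, h'⟩ else 0) = ∑ j ∈ range N, g j := by
    rw [← Fin.sum_univ_eq_sum_range]
  have h2 : ∑ j ∈ range N, g j = ∑ j ∈ range n, g j := by
    refine (Finset.sum_subset (Finset.range_subset_range.mpr h) ?_).symm
    intro j _ hj
    simp only [Finset.mem_range, not_lt] at hj
    simp [hg, Nat.not_lt.mpr hj]
  have h3 : ∑ j ∈ range n, g j = ∑ k : Fin n, g k := by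
    rw [← Fin.sum_univ_eq_sum_range]
  rw [h1, h2, h3]
  refine Finset.sum_congr rfl fun k _ => ?_
  simp [hg]

def padv {n N : ℕ} (h : n ≤ N) (v : Fin n → ℝ) : Fin N → ℝ :=
  fun i => if h' : (i : ℕ) < n then v ⟨i, h'⟩ else 0

lemma padv_nonneg {n N : ℕ} (h : n ≤ N) {v : Fin n → ℝ} (hv : ∀ k, 0 ≤ v k) (i : Fin N) :
    0 ≤ padv h v i := by
  unfold padv; split <;> simp [hv]

lemma padv_antitone {n N : ℕ} (h : n ≤ N) {v : Fin n → ℝ} (hv : Antitone v)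
    (hv0 : ∀ k, 0 ≤ v k) : Antitone (padv h v) := by
  intro i j hij
  unfold padv
  by_cases hj : (j : ℕ) < n
  · have hi : (i : ℕ) < n := lt_of_le_of_lt hij hj
    rw [dif_pos hi, dif_pos hj]
    exact hv (by exact_mod_cast hij)
  · rw [dif_neg hj]
    split
    · exact hv0 _
    · exact le_refl 0

lemma sum_padv {n N : ℕ} (h : n ≤ N) (v : Fin n → ℝ) (f : ℝ → ℝ) (hf : f 0 = 0) :
    ∑ i : Fin N, f (padv h v i) = ∑ k : Fin n, f (v k) := by
  have : ∀ i : Fin N, f (padv h v i) =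
      (if h' : (i : ℕ) < n then (fun k : Fin n => f (v k)) ⟨i, h'⟩ else 0) := by
    intro i; unfold padv; split <;> simp [hf]
  rw [Finset.sum_congr rfl fun i _ => this i]
  exact sum_dite_lt h (fun k => f (v k))

lemma sum_padv_pair {n N : ℕ} (h : n ≤ N) (v w : Fin n → ℝ) :
    ∑ i : Fin N, padv h v i * padv h w i = ∑ k : Fin n, v k * w k := by
  have : ∀ i : Fin N, padv h v i * padv h w i =
      (if h' : (i : ℕ) < n then (fun k : Fin n => v k * w k) ⟨i, h'⟩ else 0) := by
    intro i; unfold padv; split <;> simp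
  rw [Finset.sum_congr rfl fun i _ => this i]
  exact sum_dite_lt h (fun k => v k * w k)



noncomputable def minner {m n : Type*} [Fintype m] [Fintype n] (A B : Matrix m n ℝ) : ℝ :=
  ∑ i, ∑ j, A i j * B i j

variable {m n : Type*} [Fintype m] [Fintype n]

lemma frobSq_sub (A B : Matrix m n ℝ) :
    frobSq (A - B) = frobSq A - 2 * minner A B + frobSq B := by
  unfold frobSq minner
  rw [Finset.mul_sum, ← Finset.sum_sub_distrib, ← Finset.sum_add_distrib]
  refine Finset.sum_congr rfl fun i _ => ?_
  rw [Finset.mul_sum, ← Finset.sum_sub_distrib, ← Finset.sum_add_distrib]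
  refine Finset.sum_congr rfl fun j _ => ?_
  simp only [Matrix.sub_apply]; ring

lemma frobSq_eq_trace [DecidableEq n] (A : Matrix m n ℝ) : frobSq A = trace (Aᵀ * A) := by
  simp only [frobSq, trace, Matrix.diag, Matrix.mul_apply, Matrix.transpose_apply]
  rw [Finset.sum_comm]
  refine Finset.sum_congr rfl fun i _ => Finset.sum_congr rfl fun j _ => ?_
  ring

lemma minner_eq_trace [DecidableEq n] (A B : Matrix m n ℝ) : minner A B = trace (Aᵀ * B) := by
  simp only [minner, trace, Matrix.diag, Matrix.mul_apply, Matrix.transpose_apply]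
  rw [Finset.sum_comm]

variable {M N : ℕ}

lemma frobSq_conj {U : Matrix (Fin M) (Fin M) ℝ} {V : Matrix (Fin N) (Fin N) ℝ}
    (hU : Uᵀ * U = 1) (hV : Vᵀ * V = 1) (A : Matrix (Fin M) (Fin N) ℝ) :
    frobSq (U * A * Vᵀ) = frobSq A := by
  rw [frobSq_eq_trace, frobSq_eq_trace]
  have h1 : (U * A * Vᵀ)ᵀ * (U * A * Vᵀ) = V * (Aᵀ * A) * Vᵀ := by
    rw [Matrix.transpose_mul, Matrix.transpose_mul, Matrix.transpose_transpose]
    simp only [Matrix.mul_assoc]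
    rw [← Matrix.mul_assoc Uᵀ U (A * Vᵀ), hU, Matrix.one_mul]
  rw [h1, Matrix.trace_mul_cycle, ← Matrix.mul_assoc, hV, Matrix.one_mul]

/-- embedding of `Fin (min M N)` into `Fin M` -/
def e1 : Fin (min M N) → Fin M := Fin.castLE (min_le_left M N)
/-- embedding of `Fin (min M N)` into `Fin N` -/
def e2 : Fin (min M N) → Fin N := Fin.castLE (min_le_right M N)

lemma rdiag_apply_e (σ : Fin (min M N) → ℝ) (k : Fin (min M N)) :
    rdiag σ (e1 k) (e2 k) = σ k := by
  have h1 : ((e1 k) : ℕ) = ((e2 k) : ℕ) := by simp [e1, e2]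
  have h2 : ((e1 k) : ℕ) < min M N := by simpa [e1] using k.2
  unfold rdiag
  rw [dif_pos ⟨h1, h2⟩]
  congr 1

lemma rdiag_sub (σ τ : Fin (min M N) → ℝ) :
    rdiag σ - rdiag τ = rdiag (σ - τ) := by
  funext i j
  simp only [Matrix.sub_apply, rdiag]
  split <;> simp

lemma minner_rdiag (Y : Matrix (Fin M) (Fin N) ℝ) (v : Fin (min M N) → ℝ) :
    minner Y (rdiag v) = ∑ k : Fin (min M N), v k * Y (e1 k) (e2 k) := by
  unfold minner
  have hrow : ∀ i : Fin M, ∑ j, Y i j * rdiag v i j =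
      (if h : (i : ℕ) < min M N then
        (fun k : Fin (min M N) => v k * Y (e1 k) (e2 k)) ⟨i, h⟩ else 0) := by
    intro i
    by_cases h : (i : ℕ) < min M N
    · rw [dif_pos h]
      have hjlt : (i : ℕ) < N := lt_of_lt_of_le h (min_le_right M N)
      rw [Finset.sum_eq_single (⟨(i : ℕ), hjlt⟩ : Fin N)]
      · have : rdiag v i ⟨(i : ℕ), hjlt⟩ = v ⟨i, h⟩ := by simp [rdiag, h]
        rw [this]
        have he1 : e1 (⟨(i : ℕ), h⟩ : Fin (min M N)) = i := by
          simp [e1, Fin.castLE]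
        have he2 : e2 (⟨(i : ℕ), h⟩ : Fin (min M N)) = (⟨(i : ℕ), hjlt⟩ : Fin N) := by
          simp [e2, Fin.castLE]
        show Y i ⟨(i : ℕ), hjlt⟩ * v ⟨(i : ℕ), h⟩ =
          v ⟨(i : ℕ), h⟩ * Y (e1 ⟨(i : ℕ), h⟩) (e2 ⟨(i : ℕ), h⟩)
        rw [he1, he2]; ring
      · intro j _ hj
        have : rdiag v i j = 0 := by
          unfold rdiag
          rw [dif_neg]
          rintro ⟨h1, -⟩
          exact hj (by ext; exact h1.symm)
        rw [this, mul_zero]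
      · intro h'; exact absurd (Finset.mem_univ _) h'
    · rw [dif_neg h]
      refine Finset.sum_eq_zero fun j _ => ?_
      have : rdiag v i j = 0 := by
        unfold rdiag
        rw [dif_neg]
        rintro ⟨-, h2⟩
        exact h h2
      rw [this, mul_zero]
  rw [Finset.sum_congr rfl fun i _ => hrow i]
  exact sum_dite_lt (min_le_left M N) (fun k => v k * Y (e1 k) (e2 k))

lemma frobSq_rdiag (v : Fin (min M N) → ℝ) :
    frobSq (rdiag v : Matrix (Fin M) (Fin N) ℝ) = ∑ k, v k ^ 2 := by
  have h : frobSq (rdiag v : Matrix (Fin M) (Fin N) ℝ) = minner (rdiag v) (rdiag v) := by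
    simp only [frobSq, minner, sq]
  rw [h, minner_rdiag]
  refine Finset.sum_congr rfl fun k _ => ?_
  rw [rdiag_apply_e]; ring

variable {N : ℕ}

lemma exists_orth_diag {A : Matrix (Fin N) (Fin N) ℝ} (hA : A.IsHermitian) :
    ∃ W : Matrix (Fin N) (Fin N) ℝ, Wᵀ * W = 1 ∧ W * Wᵀ = 1 ∧
      A = W * diagonal hA.eigenvalues * Wᵀ := by
  set W : Matrix (Fin N) (Fin N) ℝ := (hA.eigenvectorUnitary : Matrix (Fin N) (Fin N) ℝ)
  have hst : star W = Wᵀ := W.conjTranspose_eq_transpose_of_trivial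
  have h1 : Wᵀ * W = 1 := by
    rw [← hst]; exact (Matrix.mem_unitaryGroup_iff'.mp hA.eigenvectorUnitary.2)
  have h2 : W * Wᵀ = 1 := by
    rw [← hst]; exact (Matrix.mem_unitaryGroup_iff.mp hA.eigenvectorUnitary.2)
  refine ⟨W, h1, h2, ?_⟩
  have := hA.spectral_theorem
  simp only [Unitary.conjStarAlgAut_apply] at this
  change A = W * _ * star W at this
  rwa [hst, RCLike.ofReal_real_eq_id, Function.id_comp] at this

lemma charpoly_conj (P B : Matrix (Fin N) (Fin N) ℝ) (hP : Pᵀ * P = 1) :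
    (P * B * Pᵀ).charpoly = B.charpoly := by
  have hP' : P * Pᵀ = 1 := mul_eq_one_comm.mp hP
  let f : Matrix (Fin N) (Fin N) ℝ →+* Matrix (Fin N) (Fin N) ℝ[X] := (C : ℝ →+* ℝ[X]).mapMatrix
  have key : charmatrix (P * B * Pᵀ) = f P * charmatrix B * f Pᵀ := by
    unfold charmatrix
    rw [Matrix.mul_sub, Matrix.sub_mul]
    congr 1
    · have hc : Commute (Matrix.scalar (Fin N) (X : ℝ[X])) (f P) :=
        Matrix.scalar_commute _ (fun r' => Commute.all _ _) _
      rw [← hc.eq, Matrix.mul_assoc, ← _root_.map_mul, hP', _root_.map_one, Matrix.mul_one]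
    · rw [← _root_.map_mul, ← _root_.map_mul]
  have h5 : (f Pᵀ).det * (f P).det = 1 := by
    rw [← Matrix.det_mul, ← _root_.map_mul, hP, _root_.map_one, Matrix.det_one]
  show ((P * B * Pᵀ).charmatrix).det = (B.charmatrix).det
  rw [key, Matrix.det_mul, Matrix.det_mul]
  linear_combination B.charmatrix.det * h5


lemma charpoly_diagonal_roots (e : Fin N → ℝ) :
    (Matrix.diagonal e).charpoly.roots = Multiset.map e Finset.univ.val := by
  rw [Matrix.charpoly_of_upperTriangular _ (Matrix.blockTriangular_diagonal e)]
  have h1 : ∀ i : Fin N, ((X : ℝ[X]) - C ((diagonal e) i i)) = X - C (e i) := by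
    intro i; rw [Matrix.diagonal_apply_eq]
  rw [Finset.prod_congr rfl fun i _ => h1 i, Finset.prod_eq_multiset_prod]
  have h2 : (Multiset.map (fun i => (X : ℝ[X]) - C (e i)) Finset.univ.val)
      = Multiset.map (fun a => (X : ℝ[X]) - C a) (Multiset.map e Finset.univ.val) := by
    rw [Multiset.map_map]; rfl
  rw [h2]
  exact roots_multiset_prod_X_sub_C _

lemma eig_multiset_of_diag {A : Matrix (Fin N) (Fin N) ℝ} (hA : A.IsHermitian)
    {Q : Matrix (Fin N) (Fin N) ℝ} {d : Fin N → ℝ} (hQ : Qᵀ * Q = 1)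
    (hAd : A = Q * diagonal d * Qᵀ) :
    Multiset.map hA.eigenvalues Finset.univ.val = Multiset.map d Finset.univ.val := by
  obtain ⟨W, hW1, _, hWA⟩ := exists_orth_diag hA
  have h1 : A.charpoly = (diagonal hA.eigenvalues).charpoly := by
    conv_lhs => rw [hWA]
    exact charpoly_conj W _ hW1
  have h2 : A.charpoly = (diagonal d).charpoly := by
    conv_lhs => rw [hAd]
    exact charpoly_conj Q _ hQ
  have h3 := congrArg Polynomial.roots (h1.symm.trans h2)
  rwa [charpoly_diagonal_roots, charpoly_diagonal_roots] at h3

variable {M N : ℕ}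

lemma svals_nonneg {m n : Type*} [Fintype m] [Fintype n] [DecidableEq n]
    (A : Matrix m n ℝ) (j : n) : 0 ≤ svals A j := Real.sqrt_nonneg _

lemma eig_nonneg {m n : Type*} [Fintype m] [Fintype n] [DecidableEq n]
    (A : Matrix m n ℝ) (j : n) :
    0 ≤ (Matrix.isHermitian_transpose_mul_self A).eigenvalues j :=
  (Matrix.posSemidef_conjTranspose_mul_self A).eigenvalues_nonneg j

lemma sq_svals {m n : Type*} [Fintype m] [Fintype n] [DecidableEq n]
    (A : Matrix m n ℝ) (j : n) :
    (svals A j) ^ 2 = (Matrix.isHermitian_transpose_mul_self A).eigenvalues j :=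
  Real.sq_sqrt (eig_nonneg A j)

lemma svalsDesc_eq_descSort (A : Matrix (Fin M) (Fin N) ℝ) :
    svalsDesc A = descSort (svals A) := rfl

lemma svalsDesc_nonneg (A : Matrix (Fin M) (Fin N) ℝ) (i : Fin N) :
    0 ≤ svalsDesc A i := Real.sqrt_nonneg _

lemma svalsDesc_antitone (A : Matrix (Fin M) (Fin N) ℝ) : Antitone (svalsDesc A) :=
  descSort_antitone (svals A)

/-- reindexing equivalence for `svalsDesc` -/
noncomputable def descPerm (f : Fin N → ℝ) : Equiv.Perm (Fin N) :=
  (Fin.revPerm : Equiv.Perm (Fin N)).trans (Tuple.sort f)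

lemma descSort_apply (f : Fin N → ℝ) (i : Fin N) : descSort f i = f (descPerm f i) := rfl

lemma sum_comp_descSort (f : Fin N → ℝ) (g : ℝ → ℝ) :
    ∑ i, g (descSort f i) = ∑ i, g (f i) := by
  have : ∀ i, g (descSort f i) = (fun j => g (f j)) (descPerm f i) := fun i => rfl
  rw [Finset.sum_congr rfl fun i _ => this i]
  exact Equiv.sum_comp (descPerm f) (fun j => g (f j))

lemma transpose_mul_self_conj {U : Matrix (Fin M) (Fin M) ℝ} {V : Matrix (Fin N) (Fin N) ℝ}
    (hU : Uᵀ * U = 1) (A : Matrix (Fin M) (Fin N) ℝ) :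
    (U * A * Vᵀ)ᵀ * (U * A * Vᵀ) = V * (Aᵀ * A) * Vᵀ := by
  rw [Matrix.transpose_mul, Matrix.transpose_mul, Matrix.transpose_transpose]
  simp only [Matrix.mul_assoc]
  rw [← Matrix.mul_assoc Uᵀ U (A * Vᵀ), hU, Matrix.one_mul]

lemma rdiag_transpose_mul_self (v : Fin (min M N) → ℝ) :
    (rdiag v : Matrix (Fin M) (Fin N) ℝ)ᵀ * rdiag v
      = Matrix.diagonal (padv (min_le_right M N) (fun k => v k ^ 2)) := by
  funext j k
  simp only [Matrix.mul_apply, Matrix.transpose_apply, Matrix.diagonal_apply, padv]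
  by_cases hjk : j = k
  · subst hjk
    by_cases hj : (j : ℕ) < min M N
    · rw [if_pos rfl, dif_pos hj]
      have hilt : (j : ℕ) < M := lt_of_lt_of_le hj (min_le_left M N)
      rw [Finset.sum_eq_single (⟨(j : ℕ), hilt⟩ : Fin M)]
      · have : rdiag v (⟨(j : ℕ), hilt⟩ : Fin M) j = v ⟨j, hj⟩ := by
          unfold rdiag; rw [dif_pos ⟨rfl, hj⟩]
        rw [this]; ring
      · intro b _ hb
        have : rdiag v b j = 0 := by
          unfold rdiag; rw [dif_neg]; rintro ⟨h1, -⟩; exact hb (by ext; exact h1)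
        rw [this, mul_zero]
      · intro h'; exact absurd (Finset.mem_univ _) h'
    · rw [if_pos rfl, dif_neg hj]
      refine Finset.sum_eq_zero fun i _ => ?_
      have : rdiag v i j = 0 := by
        unfold rdiag; rw [dif_neg]; rintro ⟨h1, h2⟩; rw [h1] at h2; exact hj h2
      rw [this, mul_zero]
  · rw [if_neg hjk]
    refine Finset.sum_eq_zero fun i _ => ?_
    by_cases hij : (i : ℕ) = (j : ℕ) ∧ (i : ℕ) < min M N
    · have : rdiag v i k = 0 := by
        unfold rdiag; rw [dif_neg]; rintro ⟨h1, -⟩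
        exact hjk (by ext; rw [← hij.1, h1])
      rw [this, mul_zero]
    · have : rdiag v i j = 0 := by unfold rdiag; rw [dif_neg hij]
      rw [this, zero_mul]

/-- The sorted singular values of `U * rdiag τ * Vᵀ` are the zero-padded vector `τ`. -/
lemma svalsDesc_conj_rdiag {U : Matrix (Fin M) (Fin M) ℝ} {V : Matrix (Fin N) (Fin N) ℝ}
    (hU : Uᵀ * U = 1) (hV : Vᵀ * V = 1) {τ : Fin (min M N) → ℝ}
    (hτ0 : ∀ k, 0 ≤ τ k) (hτd : Antitone τ) :
    svalsDesc (U * rdiag τ * Vᵀ) = padv (min_le_right M N) τ := by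
  set A := U * rdiag τ * Vᵀ with hA
  have hdec : Aᴴ * A = V * Matrix.diagonal (padv (min_le_right M N) (fun k => τ k ^ 2)) * Vᵀ := by
    rw [A.conjTranspose_eq_transpose_of_trivial, hA, transpose_mul_self_conj hU,
      rdiag_transpose_mul_self]
  have hmul := eig_multiset_of_diag (Matrix.isHermitian_transpose_mul_self A) hV hdec
  have hsv : Multiset.map (svals A) Finset.univ.val
      = Multiset.map (padv (min_le_right M N) τ) Finset.univ.val := by
    have h1 : svals A = Real.sqrt ∘ (Matrix.isHermitian_transpose_mul_self A).eigenvalues := rfl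
    have h2 : Real.sqrt ∘ (padv (min_le_right M N) (fun k => τ k ^ 2))
        = padv (min_le_right M N) τ := by
      funext i
      simp only [Function.comp_apply, padv]
      split
      · exact Real.sqrt_sq (hτ0 _)
      · exact Real.sqrt_zero
    calc Multiset.map (svals A) Finset.univ.val
        = Multiset.map Real.sqrt (Multiset.map
            (Matrix.isHermitian_transpose_mul_self A).eigenvalues Finset.univ.val) := by
          rw [Multiset.map_map]; rfl
      _ = Multiset.map Real.sqrt (Multiset.map (padv (min_le_right M N) (fun k => τ k ^ 2))
            Finset.univ.val) := by rw [hmul]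
      _ = Multiset.map (padv (min_le_right M N) τ) Finset.univ.val := by
          rw [Multiset.map_map, h2]
  rw [svalsDesc_eq_descSort, descSort_eq_of_multiset_eq hsv,
    descSort_eq_self_of_antitone (padv_antitone _ hτd hτ0)]

/-- Frobenius norm squared equals the sum of squared (sorted) singular values. -/
lemma frobSq_eq_sum_sq_svalsDesc (A : Matrix (Fin M) (Fin N) ℝ) :
    frobSq A = ∑ i, (svalsDesc A i) ^ 2 := by
  have h1 : frobSq A = ∑ j, (Matrix.isHermitian_transpose_mul_self A).eigenvalues j := by
    rw [frobSq_eq_trace]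
    obtain ⟨W, hW1, hW2, hWA⟩ := exists_orth_diag (Matrix.isHermitian_transpose_mul_self A)
    conv_lhs => rw [hWA]
    rw [Matrix.trace_mul_cycle, hW1, Matrix.one_mul, Matrix.trace_diagonal]
  have h2 : ∑ i, (svalsDesc A i) ^ 2 = ∑ j, (svals A j) ^ 2 := by
    rw [svalsDesc_eq_descSort]
    exact sum_comp_descSort (svals A) (fun x => x ^ 2)
  rw [h1, h2]
  exact (Finset.sum_congr rfl fun j _ => sq_svals A j).symm


/-- successive differences of a zero-padded tuple -/
noncomputable def stepv {n : ℕ} (a : Fin n → ℝ) (p : ℕ) : ℝ :=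
  (if h : p < n then a ⟨p, h⟩ else 0) - (if h : p + 1 < n then a ⟨p + 1, h⟩ else 0)

lemma stepv_nonneg {n : ℕ} {a : Fin n → ℝ} (had : Antitone a) (ha0 : ∀ k, 0 ≤ a k)
    (p : ℕ) : 0 ≤ stepv a p := by
  unfold stepv
  by_cases h1 : p + 1 < n
  · rw [dif_pos h1, dif_pos (Nat.lt_of_succ_lt h1)]
    have := had (show (⟨p, Nat.lt_of_succ_lt h1⟩ : Fin n) ≤ ⟨p + 1, h1⟩ from by
      simp [Fin.le_def])
    linarith
  · rw [dif_neg h1, sub_zero]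
    split
    · exact ha0 _
    · exact le_refl 0

lemma sum_stepv {n : ℕ} (a : Fin n → ℝ) (k : Fin n) :
    ∑ p ∈ Finset.range n, (if (k : ℕ) ≤ p then stepv a p else 0) = a k := by
  set F : ℕ → ℝ := fun p => if h : p < n then a ⟨p, h⟩ else 0 with hF
  have hfil : (Finset.range n).filter (fun p => (k : ℕ) ≤ p) = Finset.Ico (k : ℕ) n := by
    ext p; simp only [Finset.mem_filter, Finset.mem_Ico, Finset.mem_range]; omega
  rw [← Finset.sum_filter, hfil]
  have htel : ∀ m : ℕ, ∑ p ∈ Finset.range m, stepv a p = F 0 - F m := by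
    intro m
    have : ∀ p, stepv a p = F p - F (p + 1) := fun p => rfl
    rw [Finset.sum_congr rfl fun p _ => this p]
    exact Finset.sum_range_sub' F m
  rw [Finset.sum_Ico_eq_sub _ (le_of_lt k.2), htel, htel]
  have h1 : F n = 0 := by simp [hF]
  have h2 : F (k : ℕ) = a k := by simp [hF, k.2]
  rw [h1, h2]; ring

lemma sum_stepv_pad {n N : ℕ} (h : n ≤ N) (a : Fin n → ℝ) (i : Fin N) :
    padv h a i = ∑ p ∈ Finset.range n, (if (i : ℕ) ≤ p then stepv a p else 0) := by
  unfold padv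
  by_cases hi : (i : ℕ) < n
  · rw [dif_pos hi]
    exact (sum_stepv a ⟨i, hi⟩).symm
  · rw [dif_neg hi]
    refine (Finset.sum_eq_zero fun p hp => ?_).symm
    rw [if_neg]
    rw [Finset.mem_range] at hp
    omega

lemma sum_ind_le {n : ℕ} (p : ℕ) :
    ∑ k : Fin n, (if (k : ℕ) ≤ p then (1 : ℝ) else 0) ≤ (p : ℝ) + 1 := by
  rw [Fin.sum_univ_eq_sum_range (fun k => if k ≤ p then (1 : ℝ) else 0)]
  rw [← Finset.sum_filter]
  have hsub : ((Finset.range n).filter (fun k => k ≤ p)) ⊆ Finset.range (p + 1) := by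
    intro x hx
    simp only [Finset.mem_filter, Finset.mem_range] at hx ⊢
    omega
  have h1 : ((Finset.range n).filter (fun k => k ≤ p)).card ≤ p + 1 := by
    simpa using Finset.card_le_card hsub
  calc ∑ k ∈ (Finset.range n).filter (fun k => k ≤ p), (1 : ℝ)
      = ((Finset.range n).filter (fun k => k ≤ p)).card := by simp
    _ ≤ (p : ℝ) + 1 := by exact_mod_cast h1

lemma sum_ind_eq {N : ℕ} (m : ℕ) (hm : m < N) :
    ∑ i : Fin N, (if (i : ℕ) ≤ m then (1 : ℝ) else 0) = (m : ℝ) + 1 := by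
  rw [Fin.sum_univ_eq_sum_range (fun k => if k ≤ m then (1 : ℝ) else 0)]
  rw [← Finset.sum_filter]
  have h1 : (Finset.range N).filter (fun k => k ≤ m) = Finset.range (m + 1) := by
    ext x; simp [Finset.mem_filter, Finset.mem_range]; omega
  rw [h1]
  simp [Finset.card_range]

lemma swap4 {n N n2 N2 : ℕ} (G : Fin n → Fin N → ℕ → ℕ → ℝ) :
    ∑ k, ∑ i, ∑ p ∈ Finset.range n2, ∑ q ∈ Finset.range N2, G k i p q
      = ∑ p ∈ Finset.range n2, ∑ q ∈ Finset.range N2, ∑ k, ∑ i, G k i p q := by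
  calc ∑ k, ∑ i, ∑ p ∈ Finset.range n2, ∑ q ∈ Finset.range N2, G k i p q
      = ∑ k, ∑ p ∈ Finset.range n2, ∑ i, ∑ q ∈ Finset.range N2, G k i p q :=
        Finset.sum_congr rfl fun k _ => Finset.sum_comm
    _ = ∑ p ∈ Finset.range n2, ∑ k, ∑ i, ∑ q ∈ Finset.range N2, G k i p q := Finset.sum_comm
    _ = ∑ p ∈ Finset.range n2, ∑ k, ∑ q ∈ Finset.range N2, ∑ i, G k i p q :=
        Finset.sum_congr rfl fun p _ => Finset.sum_congr rfl fun k _ => Finset.sum_comm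
    _ = ∑ p ∈ Finset.range n2, ∑ q ∈ Finset.range N2, ∑ k, ∑ i, G k i p q :=
        Finset.sum_congr rfl fun p _ => Finset.sum_comm

lemma swap3 {N n2 N2 : ℕ} (G : Fin N → ℕ → ℕ → ℝ) :
    ∑ i, ∑ p ∈ Finset.range n2, ∑ q ∈ Finset.range N2, G i p q
      = ∑ p ∈ Finset.range n2, ∑ q ∈ Finset.range N2, ∑ i, G i p q := by
  calc ∑ i, ∑ p ∈ Finset.range n2, ∑ q ∈ Finset.range N2, G i p q
      = ∑ p ∈ Finset.range n2, ∑ i, ∑ q ∈ Finset.range N2, G i p q := Finset.sum_comm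
    _ = ∑ p ∈ Finset.range n2, ∑ q ∈ Finset.range N2, ∑ i, G i p q :=
        Finset.sum_congr rfl fun p _ => Finset.sum_comm

lemma rearrange {n N : ℕ} (h : n ≤ N) (a : Fin n → ℝ) (b : Fin N → ℝ)
    (had : Antitone a) (ha0 : ∀ k, 0 ≤ a k) (hbd : Antitone b) (hb0 : ∀ i, 0 ≤ b i)
    (S : Fin n → Fin N → ℝ) (hS0 : ∀ k i, 0 ≤ S k i)
    (hrow : ∀ k, ∑ i, S k i ≤ 1) (hcol : ∀ i, ∑ k, S k i ≤ 1) :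
    ∑ k, ∑ i, a k * b i * S k i ≤ ∑ i : Fin N, padv h a i * b i := by
  set δ := stepv a with hδ
  set ε := stepv b with hε
  have hδ0 : ∀ p, 0 ≤ δ p := stepv_nonneg had ha0
  have hε0 : ∀ q, 0 ≤ ε q := stepv_nonneg hbd hb0
  set T : ℕ → ℕ → ℝ := fun p q => ∑ k : Fin n, ∑ i : Fin N,
    (if (k : ℕ) ≤ p then (1 : ℝ) else 0) * (if (i : ℕ) ≤ q then (1 : ℝ) else 0) * S k i with hT
  set Cc : ℕ → ℕ → ℝ := fun p q => ∑ i : Fin N,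
    (if (i : ℕ) ≤ p then (1 : ℝ) else 0) * (if (i : ℕ) ≤ q then (1 : ℝ) else 0) with hC
  have hsplit : ∀ (c : ℝ) (p : ℕ) (x : ℕ),
      (if x ≤ p then c else 0) = c * (if x ≤ p then (1 : ℝ) else 0) := by
    intro c p x; split <;> ring
  -- LHS in terms of T
  have hLHS : ∑ k, ∑ i, a k * b i * S k i
      = ∑ p ∈ Finset.range n, ∑ q ∈ Finset.range N, δ p * ε q * T p q := by
    have h1 : ∀ (k : Fin n) (i : Fin N), a k * b i * S k i
        = ∑ p ∈ Finset.range n, ∑ q ∈ Finset.range N,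
            δ p * ε q * ((if (k : ℕ) ≤ p then (1 : ℝ) else 0)
              * (if (i : ℕ) ≤ q then (1 : ℝ) else 0) * S k i) := by
      intro k i
      rw [← sum_stepv a k, ← sum_stepv b i, Finset.sum_mul_sum, Finset.sum_mul]
      refine Finset.sum_congr rfl fun p _ => ?_
      rw [Finset.sum_mul]
      refine Finset.sum_congr rfl fun q _ => ?_
      rw [hsplit (δ p) p (k : ℕ), hsplit (ε q) q (i : ℕ)]
      ring
    rw [Finset.sum_congr rfl fun k _ => Finset.sum_congr rfl fun i _ => h1 k i, swap4]
    refine Finset.sum_congr rfl fun p _ => Finset.sum_congr rfl fun q _ => ?_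
    simp only [hT]
    rw [Finset.mul_sum]
    refine Finset.sum_congr rfl fun k _ => ?_
    rw [Finset.mul_sum]
  -- RHS in terms of Cc
  have hRHS : ∑ i : Fin N, padv h a i * b i
      = ∑ p ∈ Finset.range n, ∑ q ∈ Finset.range N, δ p * ε q * Cc p q := by
    have h1 : ∀ i : Fin N, padv h a i * b i
        = ∑ p ∈ Finset.range n, ∑ q ∈ Finset.range N,
            δ p * ε q * ((if (i : ℕ) ≤ p then (1 : ℝ) else 0)
              * (if (i : ℕ) ≤ q then (1 : ℝ) else 0)) := by
      intro i
      rw [sum_stepv_pad h a i, ← sum_stepv b i, Finset.sum_mul_sum]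
      refine Finset.sum_congr rfl fun p _ => ?_
      refine Finset.sum_congr rfl fun q _ => ?_
      rw [hsplit (δ p) p (i : ℕ), hsplit (ε q) q (i : ℕ)]
      ring
    rw [Finset.sum_congr rfl fun i _ => h1 i, swap3]
    refine Finset.sum_congr rfl fun p _ => Finset.sum_congr rfl fun q _ => ?_
    simp only [hC]
    rw [Finset.mul_sum]
  rw [hLHS, hRHS]
  -- compare term by term
  refine Finset.sum_le_sum fun p hp => Finset.sum_le_sum fun q hq => ?_
  rw [Finset.mem_range] at hp hq
  refine mul_le_mul_of_nonneg_left ?_ (mul_nonneg (hδ0 p) (hε0 q))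
  -- T p q ≤ Cc p q
  have hT1 : T p q ≤ (p : ℝ) + 1 := by
    refine le_trans (Finset.sum_le_sum fun k _ =>
      (?_ : ∑ i : Fin N, (if (k : ℕ) ≤ p then (1 : ℝ) else 0)
        * (if (i : ℕ) ≤ q then (1 : ℝ) else 0) * S k i ≤ if (k : ℕ) ≤ p then (1 : ℝ) else 0))
      (sum_ind_le p)
    by_cases hk : (k : ℕ) ≤ p
    · rw [if_pos hk]
      refine le_trans (Finset.sum_le_sum fun i _ => ?_) (hrow k)
      rw [one_mul]
      by_cases hi : (i : ℕ) ≤ q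
      · rw [if_pos hi, one_mul]
      · rw [if_neg hi, zero_mul]; exact hS0 k i
    · rw [if_neg hk]
      refine le_of_eq (Finset.sum_eq_zero fun i _ => ?_)
      rw [zero_mul, zero_mul]
  have hT2 : T p q ≤ (q : ℝ) + 1 := by
    have hswap : T p q = ∑ i : Fin N, ∑ k : Fin n,
        (if (k : ℕ) ≤ p then (1 : ℝ) else 0) * (if (i : ℕ) ≤ q then (1 : ℝ) else 0) * S k i :=
      Finset.sum_comm
    rw [hswap]
    refine le_trans (Finset.sum_le_sum fun i _ =>
      (?_ : ∑ k : Fin n, (if (k : ℕ) ≤ p then (1 : ℝ) else 0)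
        * (if (i : ℕ) ≤ q then (1 : ℝ) else 0) * S k i ≤ if (i : ℕ) ≤ q then (1 : ℝ) else 0))
      (sum_ind_le q)
    by_cases hi : (i : ℕ) ≤ q
    · rw [if_pos hi]
      refine le_trans (Finset.sum_le_sum fun k _ => ?_) (hcol i)
      rw [mul_one]
      by_cases hk : (k : ℕ) ≤ p
      · rw [if_pos hk, one_mul]
      · rw [if_neg hk, zero_mul]; exact hS0 k i
    · rw [if_neg hi]
      refine le_of_eq (Finset.sum_eq_zero fun k _ => ?_)
      rw [mul_zero, zero_mul]
  have hCc : Cc p q = ((min p q : ℕ) : ℝ) + 1 := by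
    simp only [hC]
    have h2 : ∀ i : Fin N, (if (i : ℕ) ≤ p then (1 : ℝ) else 0)
        * (if (i : ℕ) ≤ q then (1 : ℝ) else 0)
        = if (i : ℕ) ≤ min p q then (1 : ℝ) else 0 := by
      intro i
      by_cases h3 : (i : ℕ) ≤ min p q
      · rw [if_pos h3, if_pos (le_trans h3 (min_le_left p q)),
          if_pos (le_trans h3 (min_le_right p q)), one_mul]
      · rw [if_neg h3]
        rcases Nat.not_le.mp h3 with _
        by_cases h4 : (i : ℕ) ≤ p
        · rw [if_neg (by omega : ¬ (i : ℕ) ≤ q), mul_zero]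
        · rw [if_neg h4, zero_mul]
    rw [Finset.sum_congr rfl fun i _ => h2 i]
    exact sum_ind_eq (min p q) (lt_of_le_of_lt (min_le_left p q) (lt_of_lt_of_le hp h))
  rw [hCc]
  rcases le_total p q with hpq | hpq
  · rw [min_eq_left hpq]; exact_mod_cast hT1
  · rw [min_eq_right hpq]; exact_mod_cast hT2


lemma sum_sq_row {m n : Type*} [Fintype m] [Fintype n] (P : Matrix m n ℝ) (i : m) :
    ∑ j, P i j ^ 2 = (P * Pᵀ) i i := by
  simp only [Matrix.mul_apply, Matrix.transpose_apply, sq]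

lemma sum_sq_col {m n : Type*} [Fintype m] [Fintype n] (P : Matrix m n ℝ) (j : n) :
    ∑ i, P i j ^ 2 = (Pᵀ * P) j j := by
  simp only [Matrix.mul_apply, Matrix.transpose_apply, sq]

lemma sum_emb_le {n m : ℕ} (e : Fin n → Fin m) (he : Function.Injective e)
    (f : Fin m → ℝ) (hf : ∀ i, 0 ≤ f i) : ∑ k, f (e k) ≤ ∑ i, f i := by
  rw [← Finset.sum_image (fun x _ y _ hxy => he hxy)]
  exact Finset.sum_le_sum_of_subset_of_nonneg (Finset.subset_univ _)
    (fun i _ _ => hf i)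

lemma e1_injective : Function.Injective (e1 : Fin (min M N) → Fin M) :=
  Fin.castLE_injective _

lemma e2_injective : Function.Injective (e2 : Fin (min M N) → Fin N) :=
  Fin.castLE_injective _

/-- von Neumann-type trace inequality against a fixed SVD-decomposed matrix. -/
lemma minner_le_sum {U : Matrix (Fin M) (Fin M) ℝ} {V : Matrix (Fin N) (Fin N) ℝ}
    {σ : Fin (min M N) → ℝ} (hU : Uᵀ * U = 1) (hV : Vᵀ * V = 1)
    (hσ0 : ∀ k, 0 ≤ σ k) (hσd : Antitone σ) (X : Matrix (Fin M) (Fin N) ℝ) :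
    minner X (U * rdiag σ * Vᵀ)
      ≤ ∑ i : Fin N, padv (min_le_right M N) σ i * svalsDesc X i := by
  have hU' : U * Uᵀ = 1 := mul_eq_one_comm.mp hU
  have hV' : V * Vᵀ = 1 := mul_eq_one_comm.mp hV
  set hH := Matrix.isHermitian_transpose_mul_self X with hHdef
  obtain ⟨W, hW1, hW2, hWX⟩ := exists_orth_diag hH
  set d : Fin N → ℝ := hH.eigenvalues with hd
  have hd0 : ∀ j, 0 ≤ d j := eig_nonneg X
  set s : Fin N → ℝ := svals X with hs
  have hs0 : ∀ j, 0 ≤ s j := fun j => Real.sqrt_nonneg _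
  have hs_sq : ∀ j, s j ^ 2 = d j := fun j => sq_svals X j
  have hXtX : Xᵀ * X = W * Matrix.diagonal d * Wᵀ := by
    rw [← X.conjTranspose_eq_transpose_of_trivial]; exact hWX
  set G := X * W with hG
  have hGtG : Gᵀ * G = Matrix.diagonal d := by
    rw [hG, Matrix.transpose_mul]
    calc Wᵀ * Xᵀ * (X * W) = Wᵀ * (Xᵀ * X) * W := by
          rw [Matrix.mul_assoc, Matrix.mul_assoc, Matrix.mul_assoc]
      _ = Wᵀ * (W * Matrix.diagonal d * Wᵀ) * W := by rw [hXtX]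
      _ = (Wᵀ * W) * Matrix.diagonal d * (Wᵀ * W) := by
          simp only [Matrix.mul_assoc]
      _ = Matrix.diagonal d := by rw [hW1, Matrix.one_mul, Matrix.mul_one]
  have hGcol : ∀ j, d j = 0 → ∀ i, G i j = 0 := by
    intro j hj i
    have hsum : ∑ t, G t j ^ 2 = 0 := by rw [sum_sq_col, hGtG, Matrix.diagonal_apply_eq, hj]
    have := (Finset.sum_eq_zero_iff_of_nonneg (fun t _ => sq_nonneg (G t j))).mp hsum i
      (Finset.mem_univ i)
    exact pow_eq_zero_iff (by norm_num) |>.mp this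
  set e' : Fin N → ℝ := fun j => if d j = 0 then 0 else (s j)⁻¹ with he'
  set A' := G * Matrix.diagonal e' with hA'
  set ind : Fin N → ℝ := fun j => if d j = 0 then 0 else 1 with hind
  have hsne : ∀ j, d j ≠ 0 → s j ≠ 0 := by
    intro j hj
    intro hcon
    apply hj
    rw [← hs_sq j, hcon]; ring
  have hA'tA' : A'ᵀ * A' = Matrix.diagonal ind := by
    rw [hA', Matrix.transpose_mul, Matrix.diagonal_transpose]
    calc Matrix.diagonal e' * Gᵀ * (G * Matrix.diagonal e')
        = Matrix.diagonal e' * (Gᵀ * G) * Matrix.diagonal e' := by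
          simp only [Matrix.mul_assoc]
      _ = Matrix.diagonal e' * Matrix.diagonal d * Matrix.diagonal e' := by rw [hGtG]
      _ = Matrix.diagonal (fun j => e' j * d j * e' j) := by
          rw [Matrix.diagonal_mul_diagonal, Matrix.diagonal_mul_diagonal]
      _ = Matrix.diagonal ind := by
          have hfun : (fun j => e' j * d j * e' j) = ind := by
            funext j
            show e' j * d j * e' j = ind j
            by_cases hj : d j = 0
            · have h1 : e' j = 0 := by simp only [he']; rw [if_pos hj]
              have h2 : ind j = 0 := by simp only [hind]; rw [if_pos hj]
              rw [h1, h2]; ring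
            · have hsj := hsne j hj
              have h1 : e' j = (s j)⁻¹ := by simp only [he']; rw [if_neg hj]
              have h2 : ind j = 1 := by simp only [hind]; rw [if_neg hj]
              rw [h1, h2, ← hs_sq j]
              field_simp
          rw [hfun]
  have hA'ind : A' * Matrix.diagonal ind = A' := by
    funext i j
    rw [Matrix.mul_diagonal]
    by_cases hj : d j = 0
    · have hz : A' i j = 0 := by
        rw [hA', Matrix.mul_diagonal]
        have h1 : e' j = 0 := by simp only [he']; rw [if_pos hj]
        rw [h1, mul_zero]
      rw [hz, zero_mul]
    · have h1 : ind j = 1 := by simp only [hind]; rw [if_neg hj]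
      rw [h1, mul_one]
  have hX' : X = A' * Matrix.diagonal s * Wᵀ := by
    have h1 : A' * Matrix.diagonal s = G := by
      rw [hA', Matrix.mul_assoc, Matrix.diagonal_mul_diagonal]
      funext i j
      rw [Matrix.mul_diagonal]
      by_cases hj : d j = 0
      · have hGz := hGcol j hj i
        have h1 : e' j = 0 := by simp only [he']; rw [if_pos hj]
        rw [h1, zero_mul, mul_zero, hGz]
      · have hsj := hsne j hj
        have h1 : e' j = (s j)⁻¹ := by simp only [he']; rw [if_neg hj]
        rw [h1, inv_mul_cancel₀ hsj, mul_one]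
    rw [h1, hG, Matrix.mul_assoc, hW2, Matrix.mul_one]
  set P := Uᵀ * A' with hP
  set Q := Vᵀ * W with hQ
  have hPtP : Pᵀ * P = Matrix.diagonal ind := by
    rw [hP, Matrix.transpose_mul, Matrix.transpose_transpose]
    calc A'ᵀ * U * (Uᵀ * A') = A'ᵀ * (U * Uᵀ) * A' := by simp only [Matrix.mul_assoc]
      _ = Matrix.diagonal ind := by rw [hU', Matrix.mul_one, hA'tA']
  have hQtQ : Qᵀ * Q = 1 := by
    rw [hQ, Matrix.transpose_mul, Matrix.transpose_transpose]
    calc Wᵀ * V * (Vᵀ * W) = Wᵀ * (V * Vᵀ) * W := by simp only [Matrix.mul_assoc]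
      _ = 1 := by rw [hV', Matrix.mul_one, hW1]
  have hQQt : Q * Qᵀ = 1 := mul_eq_one_comm.mp hQtQ
  -- row bound for P
  have hPPt : ∀ i, (P * Pᵀ) i i ≤ 1 := by
    intro i
    set B := (1 : Matrix (Fin M) (Fin M) ℝ) - A' * A'ᵀ with hB
    have hBsymm : Bᵀ = B := by
      rw [hB, Matrix.transpose_sub, Matrix.transpose_one, Matrix.transpose_mul,
        Matrix.transpose_transpose]
    have hProj : (A' * A'ᵀ) * (A' * A'ᵀ) = A' * A'ᵀ := by
      calc (A' * A'ᵀ) * (A' * A'ᵀ) = A' * (A'ᵀ * A') * A'ᵀ := by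
            simp only [Matrix.mul_assoc]
        _ = A' * Matrix.diagonal ind * A'ᵀ := by rw [hA'tA']
        _ = A' * A'ᵀ := by rw [hA'ind]
    have hBB : Bᵀ * B = B := by
      rw [hBsymm, hB]
      simp only [Matrix.sub_mul, Matrix.mul_sub, Matrix.one_mul, Matrix.mul_one, hProj]
      abel
    have hdiag : 0 ≤ (Uᵀ * B * U) i i := by
      have h6 : (B * U)ᵀ * (B * U) = Uᵀ * B * U := by
        rw [Matrix.transpose_mul]
        calc Uᵀ * Bᵀ * (B * U) = Uᵀ * (Bᵀ * B) * U := by simp only [Matrix.mul_assoc]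
          _ = Uᵀ * B * U := by rw [hBB]
      rw [← h6, ← sum_sq_col]
      exact Finset.sum_nonneg fun t _ => sq_nonneg _
    have hexp : Uᵀ * B * U = 1 - P * Pᵀ := by
      rw [hB, Matrix.mul_sub, Matrix.sub_mul, Matrix.mul_one, hU]
      congr 1
      have h8 : P * Pᵀ = Uᵀ * (A' * A'ᵀ) * U := by
        rw [hP, Matrix.transpose_mul Uᵀ A', Matrix.transpose_transpose]
        simp only [Matrix.mul_assoc]
      rw [h8]
    rw [hexp, Matrix.sub_apply, Matrix.one_apply_eq] at hdiag
    linarith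
  -- the substochastic weights
  set S : Fin (min M N) → Fin N → ℝ :=
    fun k j => (P (e1 k) j ^ 2 + Q (e2 k) j ^ 2) / 2 with hS
  have hS0 : ∀ k j, 0 ≤ S k j := fun k j => by positivity
  have hSrow : ∀ k, ∑ j, S k j ≤ 1 := by
    intro k
    rw [hS]
    have h1 : ∑ j, (P (e1 k) j ^ 2 + Q (e2 k) j ^ 2) / 2
        = ((∑ j, P (e1 k) j ^ 2) + (∑ j, Q (e2 k) j ^ 2)) / 2 := by
      rw [← Finset.sum_add_distrib, ← Finset.sum_div]
    rw [h1, sum_sq_row, sum_sq_row]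
    have h2 : (Q * Qᵀ) (e2 k) (e2 k) = 1 := by rw [hQQt, Matrix.one_apply_eq]
    have h3 := hPPt (e1 k)
    rw [h2]
    linarith
  have hScol : ∀ j, ∑ k, S k j ≤ 1 := by
    intro j
    rw [hS]
    have h1 : ∑ k : Fin (min M N), (P (e1 k) j ^ 2 + Q (e2 k) j ^ 2) / 2
        = ((∑ k : Fin (min M N), P (e1 k) j ^ 2)
            + (∑ k : Fin (min M N), Q (e2 k) j ^ 2)) / 2 := by
      rw [← Finset.sum_add_distrib, ← Finset.sum_div]
    rw [h1]
    have h2 : ∑ k : Fin (min M N), P (e1 k) j ^ 2 ≤ ∑ i : Fin M, P i j ^ 2 :=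
      sum_emb_le e1 e1_injective (fun i => P i j ^ 2) (fun i => sq_nonneg _)
    have h3 : ∑ k : Fin (min M N), Q (e2 k) j ^ 2 ≤ ∑ i : Fin N, Q i j ^ 2 :=
      sum_emb_le e2 e2_injective (fun i => Q i j ^ 2) (fun i => sq_nonneg _)
    have h4 : ∑ i : Fin M, P i j ^ 2 ≤ 1 := by
      rw [sum_sq_col, hPtP, Matrix.diagonal_apply_eq]
      by_cases hj : d j = 0
      · simp [hind, hj]
      · simp [hind, hj]
    have h5 : ∑ i : Fin N, Q i j ^ 2 = 1 := by
      rw [sum_sq_col, hQtQ, Matrix.one_apply_eq]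
    linarith
  -- expand the inner product
  have hexp : minner X (U * rdiag σ * Vᵀ)
      = ∑ k : Fin (min M N), ∑ j : Fin N, σ k * (P (e1 k) j * s j * Q (e2 k) j) := by
    have h1 : minner X (U * rdiag σ * Vᵀ) = minner (Uᵀ * X * V) (rdiag σ) := by
      rw [minner_eq_trace, minner_eq_trace]
      rw [Matrix.transpose_mul, Matrix.transpose_mul, Matrix.transpose_transpose]
      rw [show Xᵀ * (U * rdiag σ * Vᵀ) = (Xᵀ * (U * rdiag σ)) * Vᵀ by
        simp only [Matrix.mul_assoc]]
      rw [Matrix.trace_mul_comm]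
      simp only [Matrix.mul_assoc]
    have h2 : Uᵀ * X * V = P * Matrix.diagonal s * Qᵀ := by
      rw [hX', hP, hQ, Matrix.transpose_mul, Matrix.transpose_transpose]
      simp only [Matrix.mul_assoc]
    have h3 : ∀ a b, (P * Matrix.diagonal s * Qᵀ) a b = ∑ j, P a j * s j * Q b j := by
      intro a b
      rw [Matrix.mul_apply]
      refine Finset.sum_congr rfl fun j _ => ?_
      rw [Matrix.mul_diagonal, Matrix.transpose_apply]
    rw [h1, minner_rdiag, h2]
    refine Finset.sum_congr rfl fun k _ => ?_
    rw [h3, Finset.mul_sum]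
  -- bound by the substochastic sum
  have hbound : minner X (U * rdiag σ * Vᵀ)
      ≤ ∑ k : Fin (min M N), ∑ j : Fin N, σ k * s j * S k j := by
    rw [hexp]
    refine Finset.sum_le_sum fun k _ => Finset.sum_le_sum fun j _ => ?_
    have h1 : 0 ≤ σ k * s j := mul_nonneg (hσ0 k) (hs0 j)
    have h2 : P (e1 k) j * Q (e2 k) j ≤ S k j := by
      rw [hS]
      nlinarith [sq_nonneg (P (e1 k) j - Q (e2 k) j)]
    nlinarith [mul_nonneg h1 (sub_nonneg.mpr h2), sq_nonneg (P (e1 k) j - Q (e2 k) j),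
      mul_nonneg (mul_nonneg (hσ0 k) (hs0 j)) (sq_nonneg (P (e1 k) j - Q (e2 k) j))]
  -- reindex by the descending sort of singular values
  set ψ : Equiv.Perm (Fin N) := descPerm s with hψ
  have hsd : ∀ i, svalsDesc X i = s (ψ i) := fun i => rfl
  set S2 : Fin (min M N) → Fin N → ℝ := fun k i => S k (ψ i) with hS2
  have hre : ∀ k, ∑ j : Fin N, σ k * s j * S k j = ∑ i : Fin N, σ k * svalsDesc X i * S2 k i := by
    intro k
    rw [← Equiv.sum_comp ψ (fun j => σ k * s j * S k j)]
    refine Finset.sum_congr rfl fun i _ => ?_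
    rw [hsd i]
  have hfinal : ∑ k : Fin (min M N), ∑ j : Fin N, σ k * s j * S k j
      ≤ ∑ i : Fin N, padv (min_le_right M N) σ i * svalsDesc X i := by
    rw [Finset.sum_congr rfl fun k _ => hre k]
    have := rearrange (min_le_right M N) σ (svalsDesc X) hσd hσ0
      (svalsDesc_antitone X) (svalsDesc_nonneg X) S2
      (fun k i => hS0 k (ψ i))
      (fun k => by
        have h7 : (∑ i : Fin N, S2 k i) = ∑ j : Fin N, S k j := Equiv.sum_comp ψ (S k)
        rw [h7]; exact hSrow k)
      (fun i => hScol (ψ i))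
    exact this
  exact le_trans hbound hfinal

lemma sum_padv_sq {n N : ℕ} (h : n ≤ N) (v : Fin n → ℝ) :
    ∑ i : Fin N, (padv h v i) ^ 2 = ∑ k, (v k) ^ 2 := by
  simpa using sum_padv h v (fun x => x ^ 2) (by norm_num)

lemma scalar_min (α ρ s t : ℝ) (hα : 0 < α) (hρ : 0 < ρ) (hs : 0 ≤ s) (ht : 0 ≤ t) :
    α * max (t - α / ρ) 0 + ρ / 2 * (max (t - α / ρ) 0 - t) ^ 2
      ≤ α * s + ρ / 2 * (s - t) ^ 2 := by
  rcases le_or_gt (α / ρ) t with hc | hc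
  · rw [max_eq_left (by linarith)]
    have h1 : ρ * (α / ρ) = α := by field_simp
    nlinarith [mul_nonneg hρ.le (sq_nonneg (s - t + α / ρ))]
  · rw [max_eq_right (by linarith)]
    have h1 : t * ρ < α := (lt_div_iff₀ hρ).mp hc
    nlinarith [mul_nonneg hs (by nlinarith : (0:ℝ) ≤ α - ρ * t),
      mul_nonneg hρ.le (sq_nonneg s)]


end GSVT

/-- generalized singular value thresholding solves
the truncated-nuclear-norm proximal problem. -/
theorem generalized_svt_minimizer {M N : ℕ} (α ρ : ℝ) (hα : 0 < α) (hρ : 0 < ρ)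
    (θ : ℕ) (hθ : θ < min M N)
    (Z : Matrix (Fin M) (Fin N) ℝ)
    (U : Matrix (Fin M) (Fin M) ℝ) (V : Matrix (Fin N) (Fin N) ℝ)
    (σ : Fin (min M N) → ℝ)
    (hU : Uᵀ * U = 1) (hV : Vᵀ * V = 1)
    (hσ0 : ∀ i, 0 ≤ σ i) (hσd : Antitone σ)
    (hZ : Z = U * rdiag σ * Vᵀ) :
    ∀ X : Matrix (Fin M) (Fin N) ℝ,
      α * tnn θ (U * rdiag (fun i => max (σ i - (if (i : ℕ) < θ then 0 else α / ρ)) 0) * Vᵀ) +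
          ρ / 2 *
            frobSq (U * rdiag (fun i => max (σ i - (if (i : ℕ) < θ then 0 else α / ρ)) 0) * Vᵀ - Z) ≤
        α * tnn θ X + ρ / 2 * frobSq (X - Z) := by
  intro X
  have hmn : min M N ≤ N := min_le_right M N
  have hcpos : 0 < α / ρ := div_pos hα hρ
  set τ : Fin (min M N) → ℝ :=
    fun i => max (σ i - (if (i : ℕ) < θ then 0 else α / ρ)) 0 with hτ
  have hτ0 : ∀ k, 0 ≤ τ k := fun k => le_max_right _ 0
  have hτd : Antitone τ := by
    intro i j hij
    have hij' : (i : ℕ) ≤ (j : ℕ) := hij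
    simp only [hτ]
    have hcc : (if (i : ℕ) < θ then (0 : ℝ) else α / ρ)
        ≤ (if (j : ℕ) < θ then 0 else α / ρ) := by
      split_ifs with h1 h2 h2
      · exact le_rfl
      · exact le_of_lt hcpos
      · omega
      · exact le_rfl
    exact max_le_max (sub_le_sub (hσd hij) hcc) le_rfl
  set t := svalsDesc X with ht
  set σb := GSVT.padv hmn σ with hσb
  set τb := GSVT.padv hmn τ with hτb
  have ht0 : ∀ i, 0 ≤ t i := GSVT.svalsDesc_nonneg X
  have hσb0 : ∀ i, 0 ≤ σb i := GSVT.padv_nonneg hmn hσ0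
  have hXhat : svalsDesc (U * rdiag τ * Vᵀ) = τb := GSVT.svalsDesc_conj_rdiag hU hV hτ0 hτd
  -- pointwise values of τb
  have key1 : ∀ i : Fin N, θ ≤ (i : ℕ) → τb i = max (σb i - α / ρ) 0 := by
    intro i hθi
    by_cases hi : (i : ℕ) < min M N
    · have h1 : τb i = τ ⟨i, hi⟩ := by simp only [hτb, GSVT.padv]; rw [dif_pos hi]
      have h2 : σb i = σ ⟨i, hi⟩ := by simp only [hσb, GSVT.padv]; rw [dif_pos hi]
      rw [h1, h2, hτ]
      simp only
      have hneg : ¬ ((⟨(i : ℕ), hi⟩ : Fin (min M N)) : ℕ) < θ := by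
        show ¬ (i : ℕ) < θ; omega
      rw [if_neg hneg]
    · have h1 : τb i = 0 := by simp only [hτb, GSVT.padv]; rw [dif_neg hi]
      have h2 : σb i = 0 := by simp only [hσb, GSVT.padv]; rw [dif_neg hi]
      rw [h1, h2, max_eq_right (by linarith)]
  have key2 : ∀ i : Fin N, (i : ℕ) < θ → τb i = σb i := by
    intro i hθi
    have hi : (i : ℕ) < min M N := lt_trans hθi hθ
    have h1 : τb i = τ ⟨i, hi⟩ := by simp only [hτb, GSVT.padv]; rw [dif_pos hi]
    have h2 : σb i = σ ⟨i, hi⟩ := by simp only [hσb, GSVT.padv]; rw [dif_pos hi]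
    rw [h1, h2, hτ]
    simp only
    have hpos : ((⟨(i : ℕ), hi⟩ : Fin (min M N)) : ℕ) < θ := by
      show (i : ℕ) < θ; omega
    rw [if_pos hpos, sub_zero]
    exact max_eq_left (hσ0 _)
  -- value at the candidate point
  have htnnh : tnn θ (U * rdiag τ * Vᵀ)
      = ∑ i : Fin N, (if θ ≤ (i : ℕ) then τb i else 0) := by
    unfold tnn
    rw [hXhat, Finset.sum_filter]
  have hfrobh : frobSq (U * rdiag τ * Vᵀ - Z) = ∑ i : Fin N, (τb i - σb i) ^ 2 := by
    have h2 : U * rdiag τ * Vᵀ - Z = U * rdiag (τ - σ) * Vᵀ := by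
      rw [hZ, ← Matrix.sub_mul, ← Matrix.mul_sub, GSVT.rdiag_sub]
    have h3 : ∀ i : Fin N, τb i - σb i = GSVT.padv hmn (fun k => τ k - σ k) i := by
      intro i
      simp only [hτb, hσb, GSVT.padv]
      split <;> simp
    rw [h2, GSVT.frobSq_conj hU hV, GSVT.frobSq_rdiag,
      Finset.sum_congr rfl fun i _ => congrArg (· ^ 2) (h3 i), GSVT.sum_padv_sq]
    exact Finset.sum_congr rfl fun k _ => by rw [Pi.sub_apply]
  -- lower bound for the general objective
  have hminner : GSVT.minner X Z ≤ ∑ i : Fin N, σb i * t i := by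
    rw [hZ]
    exact GSVT.minner_le_sum hU hV hσ0 hσd X
  have hfrobX : frobSq X = ∑ i : Fin N, t i ^ 2 := GSVT.frobSq_eq_sum_sq_svalsDesc X
  have hfrobZ : frobSq Z = ∑ i : Fin N, σb i ^ 2 := by
    rw [hZ, GSVT.frobSq_conj hU hV, GSVT.frobSq_rdiag, ← GSVT.sum_padv_sq hmn σ]
  have hfrobXZ : ∑ i : Fin N, (t i - σb i) ^ 2 ≤ frobSq (X - Z) := by
    rw [GSVT.frobSq_sub, hfrobX, hfrobZ]
    have hexp : ∑ i : Fin N, (t i - σb i) ^ 2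
        = (∑ i : Fin N, t i ^ 2) - 2 * (∑ i : Fin N, σb i * t i)
            + ∑ i : Fin N, σb i ^ 2 := by
      rw [Finset.mul_sum, ← Finset.sum_sub_distrib, ← Finset.sum_add_distrib]
      exact Finset.sum_congr rfl fun i _ => by ring
    rw [hexp]
    linarith
  have htnnX : tnn θ X = ∑ i : Fin N, (if θ ≤ (i : ℕ) then t i else 0) := by
    unfold tnn
    rw [Finset.sum_filter]
  -- per-index comparison
  have hper : ∀ i : Fin N,
      α * (if θ ≤ (i : ℕ) then τb i else 0) + ρ / 2 * (τb i - σb i) ^ 2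
        ≤ α * (if θ ≤ (i : ℕ) then t i else 0) + ρ / 2 * (t i - σb i) ^ 2 := by
    intro i
    by_cases hθi : θ ≤ (i : ℕ)
    · rw [if_pos hθi, if_pos hθi, key1 i hθi]
      exact GSVT.scalar_min α ρ (t i) (σb i) hα hρ (ht0 i) (hσb0 i)
    · rw [if_neg hθi, if_neg hθi, key2 i (by omega)]
      have h1 := sq_nonneg (t i - σb i)
      have h2 : (σb i - σb i) ^ 2 = 0 := by ring
      rw [h2]
      nlinarith
  -- put everything together
  calc α * tnn θ (U * rdiag τ * Vᵀ) + ρ / 2 * frobSq (U * rdiag τ * Vᵀ - Z)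
      = ∑ i : Fin N, (α * (if θ ≤ (i : ℕ) then τb i else 0) + ρ / 2 * (τb i - σb i) ^ 2) := by
        rw [htnnh, hfrobh, Finset.mul_sum, Finset.mul_sum, ← Finset.sum_add_distrib]
    _ ≤ ∑ i : Fin N, (α * (if θ ≤ (i : ℕ) then t i else 0) + ρ / 2 * (t i - σb i) ^ 2) :=
        Finset.sum_le_sum fun i _ => hper i
    _ = α * tnn θ X + ρ / 2 * (∑ i : Fin N, (t i - σb i) ^ 2) := by
        rw [htnnX, Finset.mul_sum, Finset.mul_sum, ← Finset.sum_add_distrib]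
    _ ≤ α * tnn θ X + ρ / 2 * frobSq (X - Z) := by
        have h9 : ρ / 2 * (∑ i : Fin N, (t i - σb i) ^ 2) ≤ ρ / 2 * frobSq (X - Z) :=
          mul_le_mul_of_nonneg_left hfrobXZ (by linarith)
        linarith
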